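/- arXiv:1607.08168 — 6 statements merged into one kernel-verified Lean document; each statement's English description precedes it below -/
import Mathlib

section
/- For any two orthogonal projectors X and Y on a finite-dimensional Hilbert space, the operator norm satisfies ‖X + Y‖ ≤ 1 + ‖X Y‖. -/
/-!
Let `t = ‖X + Y‖ > 1`. Since `X + Y ≥ 0`, `t` is an eigenvalue of `X + Y`; for an eigenvector
`v`, idempotency gives `X Y v = (t - 1) X v` and `Y X v = (t - 1) Y v`, so `X v ≠ 0` is an
eigenvector of `X Y X` with eigenvalue `(t - 1)²`. By the C⋆-identity
`‖X Y X‖ = ‖(X Y)(X Y)⋆‖ = ‖X Y‖²`, hence `t - 1 ≤ ‖X Y‖`.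
-/

open Module Module.End

theorem IsIdempotentElem.apply_apply {R M : Type*} [Semiring R] [AddCommMonoid M] [Module R M]
    {P : End R M} (hP : IsIdempotentElem P) (x : M) : P (P x) = P x :=
  LinearMap.congr_fun hP.eq x

namespace Module.End

variable {K V : Type*} [Field K] [AddCommGroup V] [Module K V] {X Y : End K V} {t : K} {v : V}

theorem apply_apply_eq_sub_one_smul_of_add_apply_eq_smul (hY : IsIdempotentElem Y)
    (h : X v + Y v = t • v) : Y (X v) = (t - 1) • Y v := by
  have h' := congrArg Y h
  rw [map_add, map_smul, hY.apply_apply] at h'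
  rw [sub_smul, one_smul, ← h', add_sub_cancel_right]

theorem HasEigenvector.mul_mul_of_isIdempotentElem (hX : IsIdempotentElem X)
    (hY : IsIdempotentElem Y) (h : HasEigenvector (X + Y) t v) (ht0 : t ≠ 0) (ht1 : t ≠ 1) :
    HasEigenvector (X * Y * X) ((t - 1) ^ 2) (X v) := by
  have hsum : X v + Y v = t • v := h.apply_eq_smul
  have hXv : X v ≠ 0 := by
    intro hXv
    rw [hXv, zero_add] at hsum
    have : (t * (t - 1)) • v = 0 := by
      rw [mul_sub_one, sub_smul, mul_smul, ← hsum, ← map_smul, ← hsum, hY.apply_apply, sub_self]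
    exact h.2 ((smul_eq_zero.mp this).resolve_left (mul_ne_zero ht0 (sub_ne_zero.mpr ht1)))
  refine hasEigenvector_iff.mpr ⟨mem_eigenspace_iff.mpr ?_, hXv⟩
  rw [mul_apply, mul_apply, hX.apply_apply,
    apply_apply_eq_sub_one_smul_of_add_apply_eq_smul hY hsum, map_smul,
    apply_apply_eq_sub_one_smul_of_add_apply_eq_smul hX ((add_comm _ _).trans hsum),
    smul_smul, sq]

end Module.End

theorem IsStarProjection.norm_mul_mul_eq_norm_mul_sq {A : Type*} [NonUnitalNormedRing A]
    [StarRing A] [CStarRing A] {p q : A} (hq : IsStarProjection q) (hp : IsSelfAdjoint p) :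
    ‖p * q * p‖ = ‖p * q‖ ^ 2 := by
  have : p * q * p = p * q * star (p * q) := by
    rw [star_mul, hp.star_eq, hq.isSelfAdjoint.star_eq, ← mul_assoc, mul_assoc p q q,
      hq.isIdempotentElem.eq]
  rw [this, CStarRing.norm_self_mul_star, sq]

variable {E : Type*} [NormedAddCommGroup E] [InnerProductSpace ℂ E] [FiniteDimensional ℂ E]

theorem ContinuousLinearMap.hasEigenvalue_norm_of_nonneg [Nontrivial E] {T : E →L[ℂ] E}
    (hT : 0 ≤ T) : HasEigenvalue (T : End ℂ E) ‖T‖ := by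
  have h := spectrum.algebraMap_mem ℂ (CStarAlgebra.norm_mem_spectrum_of_nonneg hT)
  rw [spectrum_eq] at h
  exact HasEigenvalue.of_mem_spectrum h

theorem IsStarProjection.norm_add_le_one_add_norm_mul {X Y : E →L[ℂ] E}
    (hX : IsStarProjection X) (hY : IsStarProjection Y) : ‖X + Y‖ ≤ 1 + ‖X * Y‖ := by
  set t := ‖X + Y‖ with ht_def
  rcases le_or_gt t 1 with ht | ht
  · linarith [norm_nonneg (X * Y)]
  have : Nontrivial E := by
    by_contra hE
    rw [not_nontrivial_iff_subsingleton] at hE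
    rw [ht_def, Subsingleton.elim (X + Y) 0, norm_zero] at ht
    linarith
  have ht0 : (t : ℂ) ≠ 0 := Complex.ofReal_ne_zero.mpr (by linarith)
  have ht1 : (t : ℂ) ≠ 1 := by exact_mod_cast ht.ne'
  obtain ⟨v, hv⟩ := (ContinuousLinearMap.hasEigenvalue_norm_of_nonneg
    (add_nonneg hX.nonneg hY.nonneg)).exists_hasEigenvector
  have hXYX : HasEigenvalue ((X * Y * X : E →L[ℂ] E) : End ℂ E) (((t : ℂ) - 1) ^ 2) :=
    hasEigenvalue_of_hasEigenvector <| hv.mul_mul_of_isIdempotentElem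
      (hX.isIdempotentElem.map ContinuousLinearMap.toLinearMapRingHom)
      (hY.isIdempotentElem.map ContinuousLinearMap.toLinearMapRingHom) ht0 ht1
  have hsq : (t - 1) ^ 2 ≤ ‖X * Y‖ ^ 2 := by
    rw [← hY.norm_mul_mul_eq_norm_mul_sq hX.isSelfAdjoint]
    have hmem : ((t : ℂ) - 1) ^ 2 ∈ spectrum ℂ (X * Y * X) := by
      rw [ContinuousLinearMap.spectrum_eq]
      exact hXYX.mem_spectrum
    have := spectrum.norm_le_norm_of_mem hmem
    rwa [← Complex.ofReal_one, ← Complex.ofReal_sub, ← Complex.ofReal_pow, Complex.norm_real,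
      Real.norm_of_nonneg (sq_nonneg _)] at this
  nlinarith [norm_nonneg (X * Y)]

/-- For any two orthogonal projectors `X` and `Y` on a finite-dimensional Hilbert space,
the operator norm satisfies `‖X + Y‖ ≤ 1 + ‖X Y‖`. -/
theorem stmt0 {n : ℕ}
    (X Y : EuclideanSpace ℂ (Fin n) →L[ℂ] EuclideanSpace ℂ (Fin n))
    (hX1 : ContinuousLinearMap.adjoint X = X) (hX2 : X ∘L X = X)
    (hY1 : ContinuousLinearMap.adjoint Y = Y) (hY2 : Y ∘L Y = Y) :
    ‖X + Y‖ ≤ 1 + ‖X ∘L Y‖ :=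
  IsStarProjection.norm_add_le_one_add_norm_mul ⟨hX2, hX1⟩ ⟨hY2, hY1⟩
end

section
/- Let ρ_AB be a bipartite density operator, {E^j}_{j∈J} a nonempty finite family of binary-outcome POVMs E^j = {E^j_0, E^j_1} on B, and k ≥ 0 a real number such that for every POVM-measurement M on A (with outcomes in J) there is a probability distribution σ on J with M(ρ_AB) ≤ 2^k · σ ⊗ ρ_B. Then the adaptive success probability max over POVMs {F_j} on A of Σ_j Tr((F_j ⊗ E^j_1) ρ_AB) is at most 2^k · max_j Tr(E^j_1 ρ_B). -/
open scoped Kronecker ComplexOrder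
open Matrix

noncomputable section

/-- Partial trace over the first (A) register. -/
def ptraceFst {α β : Type*} [Fintype α] (ρ : Matrix (α × β) (α × β) ℂ) : Matrix β β ℂ :=
  fun i j => ∑ a, ρ (a, i) (a, j)

/-- The measurement map `M(ρ) = Σ_j |j⟩⟨j| ⊗ Tr_A((F_j ⊗ id) ρ)` on a bipartite state,
given a POVM `F` on the first register. -/
def measFirst {α β X : Type*} [Fintype α] [Fintype β] [DecidableEq β] [DecidableEq X]
    (F : X → Matrix α α ℂ) (ρ : Matrix (α × β) (α × β) ℂ) : Matrix (X × β) (X × β) ℂ :=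
  fun p q => if p.1 = q.1 then ptraceFst ((F p.1 ⊗ₖ (1 : Matrix β β ℂ)) * ρ) p.2 q.2 else 0

/-- The cq-state `σ ⊗ ρ_B` for a classical distribution `σ` on outcomes. -/
def cqState {β X : Type*} [DecidableEq X] (σ : X → ℝ) (ρB : Matrix β β ℂ) : Matrix (X × β) (X × β) ℂ :=
  fun p q => if p.1 = q.1 then (σ p.1 : ℂ) * ρB p.2 q.2 else 0

/-! Restricting the operator inequality `M(ρ_AB) ≤ 2^k σ ⊗ ρ_B` to the diagonal block of outcome
`j` gives `Tr_A((F_j ⊗ id) ρ_AB) ≤ 2^k σ_j ρ_B`. Pairing this with the positive operator `E^j_1`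
bounds the `j`-th success term by `2^k σ_j Tr(E^j_1 ρ_B)`, and averaging over the distribution `σ`
bounds the total by `2^k max_j Tr(E^j_1 ρ_B)`. -/

open scoped MatrixOrder Matrix.Norms.L2Operator in
theorem Matrix.PosSemidef.trace_mul_nonneg {𝕜 n : Type*} [RCLike 𝕜] [Fintype n]
    {A B : Matrix n n 𝕜} (hA : A.PosSemidef) (hB : B.PosSemidef) : 0 ≤ (A * B).trace := by
  classical
  obtain ⟨C, rfl⟩ := CStarAlgebra.nonneg_iff_eq_star_mul_self.mp hA.nonneg
  rw [star_eq_conjTranspose, mul_assoc, trace_mul_comm]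
  exact (hB.mul_mul_conjTranspose_same C).trace_nonneg

section PartialTrace

variable {α β : Type*} [Fintype α] [Fintype β]

theorem trace_ptraceFst (M : Matrix (α × β) (α × β) ℂ) : (ptraceFst M).trace = M.trace := by
  simp only [trace, diag, ptraceFst, Fintype.sum_prod_type]
  exact Finset.sum_comm

theorem ptraceFst_one_kronecker_mul [DecidableEq α] (E : Matrix β β ℂ)
    (M : Matrix (α × β) (α × β) ℂ) :
    ptraceFst (((1 : Matrix α α ℂ) ⊗ₖ E) * M) = E * ptraceFst M := by
  ext i j
  simp only [ptraceFst, mul_apply, kroneckerMap_apply, one_apply, ite_mul, one_mul, zero_mul,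
    Fintype.sum_prod_type, Finset.sum_ite_irrel, Finset.sum_const_zero, Finset.sum_ite_eq,
    Finset.mem_univ, if_true, Finset.mul_sum]
  exact Finset.sum_comm

theorem trace_kronecker_mul [DecidableEq α] [DecidableEq β] (F : Matrix α α ℂ) (E : Matrix β β ℂ)
    (ρ : Matrix (α × β) (α × β) ℂ) :
    ((F ⊗ₖ E) * ρ).trace = (E * ptraceFst ((F ⊗ₖ (1 : Matrix β β ℂ)) * ρ)).trace := by
  rw [← ptraceFst_one_kronecker_mul, ← mul_assoc, ← mul_kronecker_mul, Matrix.one_mul,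
    Matrix.mul_one, trace_ptraceFst]

end PartialTrace

section Blocks

variable {β X : Type*} [DecidableEq X]

theorem submatrix_cqState (σ : X → ℝ) (ρB : Matrix β β ℂ) (j : X) :
    (cqState σ ρB).submatrix (Prod.mk j) (Prod.mk j) = σ j • ρB := by
  ext p q
  simp [cqState, Complex.real_smul]

theorem submatrix_measFirst {α : Type*} [Fintype α] [Fintype β] [DecidableEq β]
    (F : X → Matrix α α ℂ) (ρ : Matrix (α × β) (α × β) ℂ) (j : X) :
    (measFirst F ρ).submatrix (Prod.mk j) (Prod.mk j) =
      ptraceFst ((F j ⊗ₖ (1 : Matrix β β ℂ)) * ρ) := by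
  ext p q
  simp [measFirst]

end Blocks

theorem re_trace_kronecker_mul_le_of_posSemidef_sub {α β X : Type*} [Fintype α] [Fintype β]
    [DecidableEq α] [DecidableEq β] [DecidableEq X] {F : X → Matrix α α ℂ}
    {ρ : Matrix (α × β) (α × β) ℂ} {σ : X → ℝ} {c : ℝ} {E : Matrix β β ℂ} (hE : E.PosSemidef)
    (hdom : (c • cqState σ (ptraceFst ρ) - measFirst F ρ).PosSemidef) (j : X) :
    ((F j ⊗ₖ E) * ρ).trace.re ≤ c * σ j * (E * ptraceFst ρ).trace.re := by
  have hblock :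
      ((c * σ j) • ptraceFst ρ - ptraceFst ((F j ⊗ₖ (1 : Matrix β β ℂ)) * ρ)).PosSemidef := by
    rw [mul_smul, ← submatrix_cqState, ← submatrix_measFirst]
    exact hdom.submatrix (Prod.mk j)
  have hnonneg := (Complex.le_def.mp (hE.trace_mul_nonneg hblock)).1
  rw [trace_kronecker_mul]
  simpa [Matrix.mul_sub, trace_sub] using hnonneg

theorem stmt2_general {a b : ℕ} {J : Type} [Fintype J] [Nonempty J] [DecidableEq J]
    (ρ : Matrix (Fin a × Fin b) (Fin a × Fin b) ℂ)
    (E1 : J → Matrix (Fin b) (Fin b) ℂ)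
    (hE1 : ∀ j, (E1 j).PosSemidef)
    (k : ℝ)
    (hImax : ∀ F : J → Matrix (Fin a) (Fin a) ℂ,
      (∀ j, (F j).PosSemidef) → ∑ j, F j = 1 →
      ∃ σ : J → ℝ, (∀ j, 0 ≤ σ j) ∧ ∑ j, σ j = 1 ∧
        (((2 : ℝ) ^ k) • cqState σ (ptraceFst ρ) - measFirst F ρ).PosSemidef) :
    ∀ F : J → Matrix (Fin a) (Fin a) ℂ, (∀ j, (F j).PosSemidef) → ∑ j, F j = 1 →
      (∑ j, ((F j ⊗ₖ E1 j) * ρ).trace.re)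
        ≤ (2 : ℝ) ^ k *
            Finset.univ.sup' Finset.univ_nonempty (fun j => ((E1 j * ptraceFst ρ)).trace.re) := by
  intro F hF hFsum
  obtain ⟨σ, hσ0, hσ1, hdom⟩ := hImax F hF hFsum
  set t := Finset.univ.sup' Finset.univ_nonempty fun j => (E1 j * ptraceFst ρ).trace.re
  calc ∑ j, ((F j ⊗ₖ E1 j) * ρ).trace.re
      ≤ ∑ j, 2 ^ k * σ j * (E1 j * ptraceFst ρ).trace.re :=
        Finset.sum_le_sum fun j _ => re_trace_kronecker_mul_le_of_posSemidef_sub (hE1 j) hdom j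
    _ ≤ ∑ j, 2 ^ k * σ j * t :=
        Finset.sum_le_sum fun j _ => mul_le_mul_of_nonneg_left
          (Finset.le_sup' (fun j => (E1 j * ptraceFst ρ).trace.re) (Finset.mem_univ j))
          (mul_nonneg (by positivity) (hσ0 j))
    _ = 2 ^ k * t := by rw [← Finset.sum_mul, ← Finset.mul_sum, hσ1, mul_one]

/-- If every measurement on `A` with outcomes in `J` is dominated as
`M(ρ_AB) ≤ 2^k σ ⊗ ρ_B`, then the adaptive success probability is at most
`2^k` times the non-adaptive success probability `max_j Tr(E^j_1 ρ_B)`. -/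
theorem stmt2 {a b : ℕ} {J : Type} [Fintype J] [Nonempty J] [DecidableEq J]
    (ρ : Matrix (Fin a × Fin b) (Fin a × Fin b) ℂ) (hρ : ρ.PosSemidef) (htr : ρ.trace = 1)
    (E1 : J → Matrix (Fin b) (Fin b) ℂ)
    (hE1 : ∀ j, (E1 j).PosSemidef) (hE0 : ∀ j, ((1 : Matrix (Fin b) (Fin b) ℂ) - E1 j).PosSemidef)
    (k : ℝ) (hk : 0 ≤ k)
    (hImax : ∀ F : J → Matrix (Fin a) (Fin a) ℂ,
      (∀ j, (F j).PosSemidef) → ∑ j, F j = 1 →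
      ∃ σ : J → ℝ, (∀ j, 0 ≤ σ j) ∧ ∑ j, σ j = 1 ∧
        (((2 : ℝ) ^ k) • cqState σ (ptraceFst ρ) - measFirst F ρ).PosSemidef) :
    ∀ F : J → Matrix (Fin a) (Fin a) ℂ, (∀ j, (F j).PosSemidef) → ∑ j, F j = 1 →
      (∑ j, ((F j ⊗ₖ E1 j) * ρ).trace.re)
        ≤ (2 : ℝ) ^ k *
            Finset.univ.sup' Finset.univ_nonempty (fun j => ((E1 j * ptraceFst ρ)).trace.re) :=
  stmt2_general ρ E1 hE1 k hImax
end
end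

section
/- Let ρ_AB be a bipartite density operator. For every POVM {F_x}_{x∈X} on A there exists a probability distribution (λ_x)_{x∈X} such that for all x, Tr_A((F_x ⊗ id_B) ρ_AB) ≤ 2^{H_0(A)} · λ_x · ρ_B, where H_0(A) = log₂(rank ρ_A). In other words, the max-accessible-information I_max^acc(B;A) is at most H_0(A). -/
open scoped Kronecker ComplexOrder
open Matrix

noncomputable section

/-- Partial trace over the second (B) register. -/
def ptraceSnd {α β : Type*} [Fintype β] (ρ : Matrix (α × β) (α × β) ℂ) : Matrix α α ℂ :=
  fun i j => ∑ b, ρ (i, b) (j, b)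

/-! Let `P` be the support projection of `ρ_A`. As `Tr(ρ_A (1 - P)) = 0`, the state `ρ_AB` lives
on `supp ρ_A ⊗ H_B`, i.e. `ρ_AB (P ⊗ 1) = ρ_AB`, so `Tr_A((F_x ⊗ 1) ρ_AB) = Tr_A((P F_x P ⊗ 1) ρ_AB)`.
The map `M ↦ Tr_A((M ⊗ 1) ρ_AB)` is positive and `P F_x P ≤ Tr(P F_x P) • 1`, hence
`Tr_A((F_x ⊗ 1) ρ_AB) ≤ Tr(P F_x P) • ρ_B`. Finally `λ_x = Tr(P F_x P) / rank ρ_A` is a probability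
distribution, because `∑ₓ P F_x P = P` and `Tr P = rank ρ_A`. -/

open scoped MatrixOrder

theorem Matrix.sub_kronecker {l m n p R : Type*} [NonUnitalNonAssocRing R]
    (A₁ A₂ : Matrix l m R) (B : Matrix n p R) : (A₁ - A₂) ⊗ₖ B = A₁ ⊗ₖ B - A₂ ⊗ₖ B := by
  ext
  simp [sub_mul]

theorem IsStarProjection.kronecker {l m R : Type*} [Fintype l] [Fintype m] [CommRing R]
    [StarRing R] {p : Matrix l l R} {q : Matrix m m R} (hp : IsStarProjection p)
    (hq : IsStarProjection q) : IsStarProjection (p ⊗ₖ q) where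
  isIdempotentElem := by
    rw [IsIdempotentElem, ← mul_kronecker_mul, hp.isIdempotentElem.eq, hq.isIdempotentElem.eq]
  isSelfAdjoint := by
    rw [IsSelfAdjoint, star_eq_conjTranspose, conjTranspose_kronecker, ← star_eq_conjTranspose,
      ← star_eq_conjTranspose, hp.isSelfAdjoint.star_eq, hq.isSelfAdjoint.star_eq]

theorem Matrix.rank_pos_of_ne_zero {m n K : Type*} [Fintype n] [Field K] {A : Matrix m n K}
    (hA : A ≠ 0) : 0 < A.rank := by
  classical
  rw [Nat.pos_iff_ne_zero, Matrix.rank, Ne, Submodule.finrank_eq_zero, LinearMap.range_eq_bot,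
    ← Matrix.toLin'_apply', ← map_zero Matrix.toLin']
  exact fun h => hA (Matrix.toLin'.injective h)

section Spectral

variable {n 𝕜 : Type*} [Fintype n] [DecidableEq n] [RCLike 𝕜]

lemma Matrix.PosSemidef.le_re_trace_smul_one {G : Matrix n n 𝕜} (hG : G.PosSemidef) :
    G ≤ RCLike.re G.trace • (1 : Matrix n n 𝕜) := by
  rw [← Algebra.algebraMap_eq_smul_one]
  refine le_algebraMap_of_spectrum_le fun t ht => ?_
  obtain ⟨i, rfl⟩ := hG.isHermitian.spectrum_real_eq_range_eigenvalues ▸ ht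
  rw [hG.isHermitian.trace_eq_sum_eigenvalues, map_sum]
  simp only [RCLike.ofReal_re]
  exact Finset.single_le_sum (fun j _ => hG.eigenvalues_nonneg j) (Finset.mem_univ i)

lemma Matrix.IsHermitian.exists_isStarProjection {A : Matrix n n 𝕜} (hA : A.IsHermitian) :
    ∃ P : Matrix n n 𝕜, IsStarProjection P ∧ A * P = A ∧ P.trace = A.rank := by
  have hcont (f : ℝ → ℝ) : ContinuousOn f (spectrum ℝ A) := A.finite_real_spectrum.continuousOn f
  set supp : ℝ → ℝ := fun t => if t = 0 then 0 else 1
  refine ⟨cfc supp A, ⟨?_, cfc_predicate _ _⟩, ?_, ?_⟩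
  · rw [IsIdempotentElem, ← cfc_mul _ _ _ (hcont _) (hcont _)]
    exact cfc_congr fun t _ => by by_cases h : t = 0 <;> simp [supp, h]
  · calc A * cfc supp A = cfc (fun t => t) A * cfc supp A := by rw [cfc_id' ℝ A]
      _ = cfc (fun t => t * supp t) A := (cfc_mul _ _ _ (hcont _) (hcont _)).symm
      _ = cfc (fun t => t) A := cfc_congr fun t _ => by by_cases h : t = 0 <;> simp [supp, h]
      _ = A := cfc_id' ℝ A
  · rw [hA.cfc_eq, IsHermitian.cfc, trace_map', trace_diagonal, hA.rank_eq_card_non_zero_eigs,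
      Fintype.card_subtype, Finset.card_eq_sum_ones, Finset.sum_filter]
    push_cast
    refine Finset.sum_congr rfl fun i _ => ?_
    by_cases h : hA.eigenvalues i = 0 <;> simp [supp, h]

end Spectral

section PartialTrace

variable {α β : Type*}

lemma ptraceFst_eq_sum_submatrix [Fintype α] (X : Matrix (α × β) (α × β) ℂ) :
    ptraceFst X = ∑ a, X.submatrix (Prod.mk a) (Prod.mk a) := by
  ext i j
  simp [ptraceFst, Matrix.sum_apply]

lemma ptraceSnd_eq_sum_submatrix [Fintype β] (X : Matrix (α × β) (α × β) ℂ) :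
    ptraceSnd X = ∑ b, X.submatrix (·, b) (·, b) := by
  ext i j
  simp [ptraceSnd, Matrix.sum_apply]

lemma posSemidef_ptraceFst [Fintype α] {X : Matrix (α × β) (α × β) ℂ} (hX : X.PosSemidef) :
    (ptraceFst X).PosSemidef := by
  rw [ptraceFst_eq_sum_submatrix]
  exact posSemidef_sum _ fun a _ => hX.submatrix _

lemma posSemidef_ptraceSnd [Fintype β] {X : Matrix (α × β) (α × β) ℂ} (hX : X.PosSemidef) :
    (ptraceSnd X).PosSemidef := by
  rw [ptraceSnd_eq_sum_submatrix]
  exact posSemidef_sum _ fun b _ => hX.submatrix _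

lemma ptraceFst_sub [Fintype α] (X Y : Matrix (α × β) (α × β) ℂ) :
    ptraceFst (X - Y) = ptraceFst X - ptraceFst Y := by
  ext i j
  simp [ptraceFst, Finset.sum_sub_distrib]

lemma ptraceFst_smul [Fintype α] (c : ℝ) (X : Matrix (α × β) (α × β) ℂ) :
    ptraceFst (c • X) = c • ptraceFst X := by
  ext i j
  simp [ptraceFst, Finset.smul_sum]

lemma trace_ptraceSnd [Fintype α] [Fintype β] (X : Matrix (α × β) (α × β) ℂ) :
    (ptraceSnd X).trace = X.trace := by
  simp [trace, ptraceSnd, Fintype.sum_prod_type]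

variable [Fintype α] [Fintype β] [DecidableEq β]

lemma trace_mul_kronecker_one (X : Matrix (α × β) (α × β) ℂ) (M : Matrix α α ℂ) :
    (X * (M ⊗ₖ (1 : Matrix β β ℂ))).trace = (ptraceSnd X * M).trace := by
  simp only [trace, diag, mul_apply, ptraceSnd, Fintype.sum_prod_type, kroneckerMap_apply,
    one_apply, mul_ite, mul_one, mul_zero, Finset.sum_ite_eq', Finset.mem_univ, if_true,
    Finset.sum_mul]
  rw [Finset.sum_comm, Finset.sum_comm]
  exact Finset.sum_congr rfl fun _ _ => Finset.sum_comm

lemma ptraceFst_kronecker_one_mul_comm (M : Matrix α α ℂ) (X : Matrix (α × β) (α × β) ℂ) :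
    ptraceFst ((M ⊗ₖ (1 : Matrix β β ℂ)) * X) = ptraceFst (X * (M ⊗ₖ (1 : Matrix β β ℂ))) := by
  ext i j
  simp only [ptraceFst, mul_apply, Fintype.sum_prod_type, kroneckerMap_apply, one_apply,
    mul_ite, mul_zero, ite_mul, zero_mul, Finset.sum_ite_eq', Finset.sum_ite_eq,
    Finset.mem_univ, if_true, mul_one]
  rw [Finset.sum_comm]
  exact Finset.sum_congr rfl fun _ _ => Finset.sum_congr rfl fun _ _ => mul_comm _ _

lemma ptraceFst_kronecker_one_mul_compress {ρ : Matrix (α × β) (α × β) ℂ}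
    (hρ : ρ.IsHermitian) {P : Matrix α α ℂ} (hP : IsSelfAdjoint P)
    (hρP : ρ * (P ⊗ₖ (1 : Matrix β β ℂ)) = ρ) (M : Matrix α α ℂ) :
    ptraceFst ((M ⊗ₖ (1 : Matrix β β ℂ)) * ρ)
      = ptraceFst (((P * M * P) ⊗ₖ (1 : Matrix β β ℂ)) * ρ) := by
  have hPρ : (P ⊗ₖ (1 : Matrix β β ℂ)) * ρ = ρ := by
    have := congrArg conjTranspose hρP
    rwa [conjTranspose_mul, conjTranspose_kronecker, conjTranspose_one, hρ.eq,
      ← star_eq_conjTranspose, hP.star_eq] at this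
  have hPMP : (P * M * P) ⊗ₖ (1 : Matrix β β ℂ)
      = (P ⊗ₖ (1 : Matrix β β ℂ)) * (M ⊗ₖ (1 : Matrix β β ℂ)) * (P ⊗ₖ (1 : Matrix β β ℂ)) := by
    simp only [← mul_kronecker_mul, one_mul]
  rw [hPMP, mul_assoc, hPρ, mul_assoc, ptraceFst_kronecker_one_mul_comm P, mul_assoc, hρP]

variable [DecidableEq α]

lemma posSemidef_ptraceFst_kronecker_one_mul {ρ : Matrix (α × β) (α × β) ℂ}
    (hρ : ρ.PosSemidef) {K : Matrix α α ℂ} (hK : K.PosSemidef) :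
    (ptraceFst ((K ⊗ₖ (1 : Matrix β β ℂ)) * ρ)).PosSemidef := by
  obtain ⟨S, rfl⟩ := CStarAlgebra.nonneg_iff_eq_star_mul_self.mp hK.nonneg
  have hS : (star S ⊗ₖ (1 : Matrix β β ℂ)) = (S ⊗ₖ (1 : Matrix β β ℂ))ᴴ := by
    rw [conjTranspose_kronecker, conjTranspose_one, star_eq_conjTranspose]
  rw [← one_mul (1 : Matrix β β ℂ), mul_kronecker_mul, mul_assoc,
    ptraceFst_kronecker_one_mul_comm, hS]
  exact posSemidef_ptraceFst (hρ.mul_mul_conjTranspose_same _)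

lemma ptraceFst_kronecker_one_mul_mono {ρ : Matrix (α × β) (α × β) ℂ} (hρ : ρ.PosSemidef)
    {K L : Matrix α α ℂ} (hKL : K ≤ L) :
    ptraceFst ((K ⊗ₖ (1 : Matrix β β ℂ)) * ρ) ≤ ptraceFst ((L ⊗ₖ (1 : Matrix β β ℂ)) * ρ) := by
  rw [le_iff, ← ptraceFst_sub, ← sub_mul, ← sub_kronecker]
  exact posSemidef_ptraceFst_kronecker_one_mul hρ hKL

lemma mul_kronecker_one_eq_self {ρ : Matrix (α × β) (α × β) ℂ} (hρ : ρ.PosSemidef)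
    {P : Matrix α α ℂ} (hP : IsStarProjection P) (hρP : ptraceSnd ρ * P = ptraceSnd ρ) :
    ρ * (P ⊗ₖ (1 : Matrix β β ℂ)) = ρ := by
  have hK := hP.one_sub.kronecker (IsStarProjection.one (R := Matrix β β ℂ))
  obtain ⟨S, rfl⟩ := CStarAlgebra.nonneg_iff_eq_star_mul_self.mp hρ.nonneg
  have hSK : S * ((1 - P) ⊗ₖ (1 : Matrix β β ℂ)) = 0 := by
    rw [← trace_conjTranspose_mul_self_eq_zero_iff, conjTranspose_mul, ← star_eq_conjTranspose,
      ← star_eq_conjTranspose, hK.isSelfAdjoint.star_eq, mul_assoc, trace_mul_comm, mul_assoc,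
      mul_assoc, hK.isIdempotentElem.eq, ← mul_assoc, trace_mul_kronecker_one, mul_sub, mul_one,
      hρP, sub_self, trace_zero]
  have hPK : P ⊗ₖ (1 : Matrix β β ℂ) = 1 - (1 - P) ⊗ₖ (1 : Matrix β β ℂ) := by
    rw [sub_kronecker, one_kronecker_one, sub_sub_cancel]
  rw [hPK, mul_sub, mul_one, mul_assoc, hSK, mul_zero, sub_zero]

end PartialTrace

/-- For every POVM `{F_x}` on `A` there is a probability distribution `(λ_x)` with
`Tr_A((F_x ⊗ id) ρ_AB) ≤ 2^{H₀(A)} λ_x ρ_B` for all `x`, where `H₀(A) = log₂ rank ρ_A`;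
i.e. `I_max^acc(B;A) ≤ H₀(A)`. -/
theorem stmt3 {a b : ℕ} {X : Type} [Fintype X]
    (ρ : Matrix (Fin a × Fin b) (Fin a × Fin b) ℂ) (hρ : ρ.PosSemidef) (htr : ρ.trace = 1)
    (F : X → Matrix (Fin a) (Fin a) ℂ) (hF : ∀ x, (F x).PosSemidef) (hsum : ∑ x, F x = 1) :
    ∃ lam : X → ℝ, (∀ x, 0 ≤ lam x) ∧ ∑ x, lam x = 1 ∧
      ∀ x, (((2 : ℝ) ^ (Real.logb 2 ((ptraceSnd ρ).rank : ℝ)) * lam x) • ptraceFst ρ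
            - ptraceFst ((F x ⊗ₖ (1 : Matrix (Fin b) (Fin b) ℂ)) * ρ)).PosSemidef := by
  obtain ⟨P, hP, hρAP, hPtr⟩ := (posSemidef_ptraceSnd hρ).isHermitian.exists_isStarProjection
  have hsupp := mul_kronecker_one_eq_self hρ hP hρAP
  have hr : (0 : ℝ) < (ptraceSnd ρ).rank := by
    refine Nat.cast_pos.mpr (rank_pos_of_ne_zero fun h => ?_)
    simpa [h] using (trace_ptraceSnd ρ).trans htr
  have hPFP (x : X) : (P * F x * P).PosSemidef := by
    simpa [← star_eq_conjTranspose, hP.isSelfAdjoint.star_eq]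
      using (hF x).mul_mul_conjTranspose_same P
  refine ⟨fun x => (P * F x * P).trace.re / (ptraceSnd ρ).rank, fun x => ?_, ?_, fun x => ?_⟩
  · exact div_nonneg (Complex.nonneg_iff.mp (hPFP x).trace_nonneg).1 hr.le
  · rw [← Finset.sum_div, ← Complex.re_sum, ← trace_sum, ← Finset.sum_mul, ← Finset.mul_sum, hsum,
      mul_one, hP.isIdempotentElem.eq, hPtr, Complex.natCast_re, div_self hr.ne']
  · rw [Real.rpow_logb two_pos (by norm_num) hr, mul_div_cancel₀ _ hr.ne', ← le_iff]
    calc ptraceFst ((F x ⊗ₖ (1 : Matrix (Fin b) (Fin b) ℂ)) * ρ)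
        = ptraceFst (((P * F x * P) ⊗ₖ (1 : Matrix (Fin b) (Fin b) ℂ)) * ρ) :=
          ptraceFst_kronecker_one_mul_compress hρ.isHermitian hP.isSelfAdjoint hsupp _
      _ ≤ ptraceFst (((P * F x * P).trace.re • 1 : Matrix (Fin a) (Fin a) ℂ)
            ⊗ₖ (1 : Matrix (Fin b) (Fin b) ℂ) * ρ) :=
          ptraceFst_kronecker_one_mul_mono hρ (hPFP x).le_re_trace_smul_one
      _ = (P * F x * P).trace.re • ptraceFst ρ := by
          rw [smul_kronecker, one_kronecker_one, smul_mul_assoc, one_mul, ptraceFst_smul]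
end
end

section
/- Composing a POVM measurement with a prior CPTP map yields a POVM measurement: if {F_x}_x is a POVM and {E_k}_k are Kraus operators of a CPTP map E (so Σ_k E_k† E_k = id), then the operators F'_x := Σ_k E_k† F_x E_k form a POVM; consequently, applying local CPTP maps E^A ⊗ E^B to ρ_AB cannot increase the max-accessible-information: I_max^acc(B';A')_{(E^A⊗E^B)(ρ)} ≤ I_max^acc(B;A)_ρ. -/
open scoped Kronecker ComplexOrder
open Matrix

noncomputable section

set_option linter.unusedSectionVars false

/-- `k` is a bound on the max-accessible-information `I_max^acc(B;A)_ρ`: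
for every POVM measurement on `A` there is a distribution `σ` with `M(ρ) ≤ 2^k σ ⊗ ρ_B`. -/
def ImaxAccBound {α β : Type*} [Fintype α] [DecidableEq α] [Fintype β] [DecidableEq β]
    (ρ : Matrix (α × β) (α × β) ℂ) (k : ℝ) : Prop :=
  ∀ (X : Type) [Fintype X] [DecidableEq X] (F : X → Matrix α α ℂ),
    (∀ x, (F x).PosSemidef) → ∑ x, F x = 1 →
    ∃ σ : X → ℝ, (∀ x, 0 ≤ σ x) ∧ ∑ x, σ x = 1 ∧
      (((2 : ℝ) ^ k) • cqState σ (ptraceFst ρ) - measFirst F ρ).PosSemidef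

/-! ### Auxiliary lemmas -/

lemma kron_conjT {l m n p : Type*} (A : Matrix l m ℂ) (B : Matrix n p ℂ) :
    (A ⊗ₖ B)ᴴ = Aᴴ ⊗ₖ Bᴴ := by
  ext ⟨i, j⟩ ⟨k, l⟩
  simp [conjTranspose_apply, kroneckerMap_apply, mul_comm]

lemma sum_psd {ι : Type*} {n : Type*} [Fintype n] (s : Finset ι)
    (f : ι → Matrix n n ℂ) (h : ∀ i ∈ s, (f i).PosSemidef) :
    (∑ i ∈ s, f i).PosSemidef := by
  classical
  induction s using Finset.induction with
  | empty => simpa using Matrix.PosSemidef.zero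
  | @insert x t hx ih =>
    rw [Finset.sum_insert hx]
    exact (h x (Finset.mem_insert_self x t)).add (ih fun i hi => h i (Finset.mem_insert_of_mem hi))

lemma ptraceFst_sum {α β : Type*} [Fintype α] {ι : Type*} (s : Finset ι)
    (M : ι → Matrix (α × β) (α × β) ℂ) :
    ptraceFst (∑ i ∈ s, M i) = ∑ i ∈ s, ptraceFst (M i) := by
  funext p q
  simp only [ptraceFst, Matrix.sum_apply]
  rw [Finset.sum_comm]

lemma sum_kron {l m n p : Type*} {ι : Type*} (s : Finset ι)
    (A : ι → Matrix l m ℂ) (B : Matrix n p ℂ) :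
    (∑ i ∈ s, A i) ⊗ₖ B = ∑ i ∈ s, (A i ⊗ₖ B) := by
  funext ⟨i, j⟩ ⟨k, l'⟩
  simp [kroneckerMap_apply, Matrix.sum_apply, Finset.sum_mul]

lemma ptrace_conj {a a' b b' : ℕ}
    (P : Matrix (Fin a') (Fin a) ℂ) (Q : Matrix (Fin b') (Fin b) ℂ)
    (R : Matrix (Fin a) (Fin a') ℂ) (S : Matrix (Fin b) (Fin b') ℂ)
    (M : Matrix (Fin a × Fin b) (Fin a × Fin b) ℂ) :
    ptraceFst ((P ⊗ₖ Q) * M * (R ⊗ₖ S))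
      = Q * ptraceFst (((R * P) ⊗ₖ (1 : Matrix (Fin b) (Fin b) ℂ)) * M) * S := by
  funext b1 b2
  simp only [ptraceFst, Matrix.mul_apply, kroneckerMap_apply, Fintype.sum_prod_type,
    Matrix.one_apply, ite_mul, mul_ite, one_mul, mul_one, zero_mul, mul_zero,
    Finset.sum_ite_eq, Finset.sum_ite_eq', Finset.mem_univ, if_true,
    Finset.sum_mul, Finset.mul_sum]
  have hL : (∑ x : Fin a' × Fin a × Fin b × Fin a × Fin b,
      P x.1 x.2.2.2.1 * Q b1 x.2.2.2.2 * M (x.2.2.2.1, x.2.2.2.2) (x.2.1, x.2.2.1)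
        * (R x.2.1 x.1 * S x.2.2.1 b2))
      = ∑ x : Fin a', ∑ x_1 : Fin a, ∑ x_2 : Fin b, ∑ x_3 : Fin a, ∑ x_4 : Fin b,
          P x x_3 * Q b1 x_4 * M (x_3, x_4) (x_1, x_2) * (R x_1 x * S x_2 b2) := by
    simp only [Fintype.sum_prod_type]
  have hR : (∑ y : Fin b × Fin b × Fin a × Fin a × Fin a',
      Q b1 y.2.1 * (R y.2.2.1 y.2.2.2.2 * P y.2.2.2.2 y.2.2.2.1 * M (y.2.2.2.1, y.2.1) (y.2.2.1, y.1))
        * S y.1 b2)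
      = ∑ x : Fin b, ∑ x_1 : Fin b, ∑ x_2 : Fin a, ∑ x_3 : Fin a, ∑ i : Fin a',
          Q b1 x_1 * (R x_2 i * P i x_3 * M (x_3, x_1) (x_2, x)) * S x b2 := by
    simp only [Fintype.sum_prod_type]
  rw [← hL, ← hR]
  refine Fintype.sum_equiv ⟨fun x => (x.2.2.1, x.2.2.2.2, x.2.1, x.2.2.2.1, x.1),
    fun y => (y.2.2.2.2, y.2.2.1, y.1, y.2.2.2.1, y.2.1), fun _ => rfl, fun _ => rfl⟩ _ _ ?_
  rintro ⟨x1, x2, x3, x4, x5⟩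
  simp only [Equiv.coe_fn_mk]
  ring

/-- Block-diagonal matrix with blocks `N x`. -/
def blk {X β : Type*} [DecidableEq X] (N : X → Matrix β β ℂ) : Matrix (X × β) (X × β) ℂ :=
  fun p q => if p.1 = q.1 then N p.1 p.2 q.2 else 0

section helpers
variable {X β β' : Type*} [Fintype X] [DecidableEq X] [Fintype β] [Fintype β'] [DecidableEq β]

lemma cq_blk (σ : X → ℝ) (ρB : Matrix β β ℂ) :
    cqState σ ρB = blk (fun x => (σ x : ℂ) • ρB) := rfl

lemma meas_blk {α : Type*} [Fintype α] (F : X → Matrix α α ℂ)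
    (ρ : Matrix (α × β) (α × β) ℂ) :
    measFirst F ρ = blk (fun x => ptraceFst ((F x ⊗ₖ (1 : Matrix β β ℂ)) * ρ)) := rfl

lemma blk_smul (c : ℝ) (N : X → Matrix β β ℂ) :
    c • blk N = blk (fun x => c • N x) := by
  funext p q
  simp only [blk, Matrix.smul_apply]
  split <;> simp

lemma blk_sub (N N' : X → Matrix β β ℂ) :
    blk N - blk N' = blk (fun x => N x - N' x) := by
  funext p q
  simp only [blk, Matrix.sub_apply]
  split <;> simp

lemma blk_sum {ι : Type*} (s : Finset ι) (N : ι → X → Matrix β β ℂ) :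
    ∑ j ∈ s, blk (N j) = blk (fun x => ∑ j ∈ s, N j x) := by
  funext p q
  simp only [Matrix.sum_apply, blk]
  split <;> simp

lemma blk_ext (N N' : X → Matrix β β ℂ) (h : ∀ x, N x = N' x) : blk N = blk N' := by
  funext p q; simp only [blk, h]

lemma blk_conj (K : Matrix β' β ℂ) (N : X → Matrix β β ℂ) :
    ((1 : Matrix X X ℂ) ⊗ₖ K) * blk N * ((1 : Matrix X X ℂ) ⊗ₖ K)ᴴ
      = blk (fun x => K * N x * Kᴴ) := by
  funext p q
  obtain ⟨x, c1⟩ := p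
  obtain ⟨y, c2⟩ := q
  simp only [blk, Matrix.mul_apply, kroneckerMap_apply, Matrix.one_apply,
    conjTranspose_apply, Fintype.sum_prod_type, ite_mul, mul_ite, zero_mul, mul_zero,
    one_mul, Finset.sum_ite_eq, Finset.sum_ite_eq', Finset.mem_univ, if_true,
    star_zero, star_mul', Finset.sum_mul, Finset.mul_sum]
  by_cases h : x = y
  · simp [h, Finset.mul_sum, mul_comm, mul_assoc, mul_left_comm]
  · simp [h, Ne.symm h, apply_ite (starRingEnd ℂ)]

end helpers

lemma conj_sum_ptrace {a b a' b' : ℕ} {ι κ : Type} [Fintype ι] [Fintype κ]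
    (KA : ι → Matrix (Fin a') (Fin a) ℂ) (KB : κ → Matrix (Fin b') (Fin b) ℂ)
    (G : Matrix (Fin a') (Fin a') ℂ) (ρ : Matrix (Fin a × Fin b) (Fin a × Fin b) ℂ) :
    ptraceFst ((G ⊗ₖ (1 : Matrix (Fin b') (Fin b') ℂ))
        * (∑ i, ∑ j, (KA i ⊗ₖ KB j) * ρ * (KA i ⊗ₖ KB j)ᴴ))
      = ∑ j, KB j * ptraceFst (((∑ i, (KA i)ᴴ * G * KA i)
          ⊗ₖ (1 : Matrix (Fin b) (Fin b) ℂ)) * ρ) * (KB j)ᴴ := by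
  calc ptraceFst ((G ⊗ₖ (1 : Matrix (Fin b') (Fin b') ℂ))
        * ∑ i, ∑ j, (KA i ⊗ₖ KB j) * ρ * (KA i ⊗ₖ KB j)ᴴ)
      = ∑ i, ∑ j, ptraceFst ((G ⊗ₖ (1 : Matrix (Fin b') (Fin b') ℂ))
          * ((KA i ⊗ₖ KB j) * ρ * (KA i ⊗ₖ KB j)ᴴ)) := by
        simp_rw [Matrix.mul_sum, ptraceFst_sum]
    _ = ∑ i, ∑ j, KB j * ptraceFst ((((KA i)ᴴ * G * KA i)
          ⊗ₖ (1 : Matrix (Fin b) (Fin b) ℂ)) * ρ) * (KB j)ᴴ := by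
        refine Finset.sum_congr rfl fun i _ => Finset.sum_congr rfl fun j _ => ?_
        have h1 : (G ⊗ₖ (1 : Matrix (Fin b') (Fin b') ℂ))
              * ((KA i ⊗ₖ KB j) * ρ * (KA i ⊗ₖ KB j)ᴴ)
            = ((G * KA i) ⊗ₖ KB j) * ρ * ((KA i)ᴴ ⊗ₖ (KB j)ᴴ) := by
          rw [kron_conjT, ← Matrix.mul_assoc, ← Matrix.mul_assoc, ← mul_kronecker_mul, Matrix.one_mul]
        rw [h1, ptrace_conj]
        simp only [← Matrix.mul_assoc]
    _ = ∑ j, KB j * ptraceFst (((∑ i, (KA i)ᴴ * G * KA i)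
          ⊗ₖ (1 : Matrix (Fin b) (Fin b) ℂ)) * ρ) * (KB j)ᴴ := by
        rw [Finset.sum_comm]
        refine Finset.sum_congr rfl fun j _ => ?_
        rw [← Matrix.sum_mul, ← Matrix.mul_sum, ← ptraceFst_sum, ← Matrix.sum_mul, ← sum_kron]

/-- Composing a POVM with a prior CPTP map (in Kraus form) yields a POVM, and consequently
applying local CPTP maps `E^A ⊗ E^B` cannot increase the max-accessible-information:
every bound `k` on `I_max^acc(B;A)_ρ` is also a bound on `I_max^acc(B';A')` of the image state. -/
theorem stmt4 {a b a' b' : ℕ} {ι κ : Type} [Fintype ι] [Fintype κ]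
    (KA : ι → Matrix (Fin a') (Fin a) ℂ) (hKA : ∑ i, (KA i)ᴴ * KA i = 1)
    (KB : κ → Matrix (Fin b') (Fin b) ℂ) (hKB : ∑ j, (KB j)ᴴ * KB j = 1)
    (ρ : Matrix (Fin a × Fin b) (Fin a × Fin b) ℂ) (hρ : ρ.PosSemidef) (htr : ρ.trace = 1) :
    (∀ (X : Type) [Fintype X] (F : X → Matrix (Fin a') (Fin a') ℂ),
        (∀ x, (F x).PosSemidef) → ∑ x, F x = 1 →
        (∀ x, (∑ i, (KA i)ᴴ * F x * KA i).PosSemidef) ∧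
          (∑ x, ∑ i, (KA i)ᴴ * F x * KA i) = 1)
    ∧ (∀ k : ℝ, ImaxAccBound ρ k →
        ImaxAccBound (∑ i, ∑ j, ((KA i ⊗ₖ KB j) * ρ * (KA i ⊗ₖ KB j)ᴴ)) k) := by
  have povm : ∀ (X : Type) [Fintype X] (F : X → Matrix (Fin a') (Fin a') ℂ),
      (∀ x, (F x).PosSemidef) → ∑ x, F x = 1 →
      (∀ x, (∑ i, (KA i)ᴴ * F x * KA i).PosSemidef) ∧
        (∑ x, ∑ i, (KA i)ᴴ * F x * KA i) = 1 := by
    intro X _ F hF hF1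
    refine ⟨fun x => sum_psd _ _ (fun i _ => (hF x).conjTranspose_mul_mul_same (KA i)), ?_⟩
    rw [Finset.sum_comm]
    have h2 : ∀ i, ∑ x, (KA i)ᴴ * F x * KA i = (KA i)ᴴ * KA i := by
      intro i
      rw [← Matrix.sum_mul, ← Matrix.mul_sum, hF1, Matrix.mul_one]
    simp_rw [h2]
    exact hKA
  refine ⟨povm, ?_⟩
  intro k hk X _ _ F hF hF1
  set ρ' := ∑ i, ∑ j, (KA i ⊗ₖ KB j) * ρ * (KA i ⊗ₖ KB j)ᴴ with hρ'
  set F' : X → Matrix (Fin a) (Fin a) ℂ := fun x => ∑ i, (KA i)ᴴ * F x * KA i with hF'def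
  obtain ⟨hF'psd, hF'1⟩ := povm X F hF hF1
  obtain ⟨σ, hσ0, hσ1, hD⟩ := hk X F' hF'psd hF'1
  refine ⟨σ, hσ0, hσ1, ?_⟩
  -- partial trace of the image state
  have hA : ptraceFst ρ' = ∑ j, KB j * ptraceFst ρ * (KB j)ᴴ := by
    have h := conj_sum_ptrace KA KB 1 ρ
    simp only [Matrix.mul_one, Matrix.one_mul, hKA, one_kronecker_one] at h
    simpa [hρ'] using h
  -- measurement of the image state
  have hB : measFirst F ρ'
      = blk (fun x => ∑ j, KB j
          * ptraceFst ((F' x ⊗ₖ (1 : Matrix (Fin b) (Fin b) ℂ)) * ρ) * (KB j)ᴴ) := by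
    rw [meas_blk]
    exact blk_ext _ _ fun x => conj_sum_ptrace KA KB (F x) ρ
  have hEq : ((2 : ℝ) ^ k) • cqState σ (ptraceFst ρ') - measFirst F ρ'
      = ∑ j, ((1 : Matrix X X ℂ) ⊗ₖ KB j)
          * (((2 : ℝ) ^ k) • cqState σ (ptraceFst ρ) - measFirst F' ρ)
          * ((1 : Matrix X X ℂ) ⊗ₖ KB j)ᴴ := by
    have hterm : ∀ j : κ, ((1 : Matrix X X ℂ) ⊗ₖ KB j)
          * (((2 : ℝ) ^ k) • cqState σ (ptraceFst ρ) - measFirst F' ρ)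
          * ((1 : Matrix X X ℂ) ⊗ₖ KB j)ᴴ
        = blk (fun x => KB j * (((2 : ℝ) ^ k) • ((σ x : ℂ) • ptraceFst ρ)
            - ptraceFst ((F' x ⊗ₖ (1 : Matrix (Fin b) (Fin b) ℂ)) * ρ)) * (KB j)ᴴ) := by
      intro j
      rw [cq_blk, meas_blk, blk_smul, blk_sub, blk_conj]
    rw [hA, hB, cq_blk, blk_smul, blk_sub]
    simp_rw [hterm]
    rw [blk_sum]
    refine blk_ext _ _ fun x => ?_
    simp only [Matrix.mul_sub, Matrix.sub_mul, Matrix.mul_smul, Matrix.smul_mul,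
      Finset.smul_sum, Finset.sum_sub_distrib, Matrix.mul_sum, Matrix.sum_mul,
      smul_smul]
  rw [hEq]
  exact sum_psd _ _ fun j _ => hD.mul_mul_conjTranspose_same _
end
end

section
/- Let P₀ and P₁ be orthogonal projectors on a finite-dimensional Hilbert space and let ρ be a density operator with Tr(P₀ρ) + Tr(P₁ρ) ≥ 1 + ε for some ε > 0. Then there exists a unit vector |φ₀⟩ in the range of P₀ (so ‖P₀|φ₀⟩‖² = 1) with ‖P₁|φ₀⟩‖² ≥ ε². -/
/-!
Let `μ` be the largest eigenvalue of `P₀ + P₁`. Since `ρ` is a density matrix,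
`Tr((P₀ + P₁)ρ) ≤ μ`, so `μ ≥ 1 + ε`. For an eigenvector `ψ` with `(P₀ + P₁)ψ = μψ`, put
`w = P₀ψ`, `v = P₁ψ`. Idempotence gives `P₁w = (μ - 1)v` and `P₀v = (μ - 1)w`, and then
self-adjointness gives `‖P₁w‖² = ⟨w, P₁w⟩ = (μ - 1)⟨ψ, P₀v⟩ = (μ - 1)²‖w‖²`.
Since `μ ∉ {0, 1}`, `w ≠ 0`, and `φ₀ = w / ‖w‖` satisfies `‖P₁φ₀‖² = (μ - 1)² ≥ ε²`.
-/

open scoped ComplexOrder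
open Matrix

namespace Matrix

theorem mulVec_mulVec_of_isIdempotentElem {R n : Type*} [NonUnitalSemiring R] [Fintype n]
    {P : Matrix n n R} (hP : IsIdempotentElem P) (x : n → R) : P *ᵥ (P *ᵥ x) = P *ᵥ x := by
  rw [mulVec_mulVec, hP.eq]

section Projections

variable {R n : Type*} [CommRing R] [Fintype n] {P Q : Matrix n n R} {μ : R} {ψ : n → R}

theorem mulVec_mulVec_eq_of_add_mulVec_eq_smul (hQ : IsIdempotentElem Q)
    (hψ : (P + Q) *ᵥ ψ = μ • ψ) : Q *ᵥ (P *ᵥ ψ) = (μ - 1) • (Q *ᵥ ψ) := by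
  rw [eq_sub_of_add_eq ((add_mulVec P Q ψ).symm.trans hψ), mulVec_sub, mulVec_smul,
    mulVec_mulVec_of_isIdempotentElem hQ, sub_smul, one_smul]

theorem mulVec_ne_zero_of_add_mulVec_eq_smul [IsDomain R] (hQ : IsIdempotentElem Q)
    (hψ : (P + Q) *ᵥ ψ = μ • ψ) (hψ0 : ψ ≠ 0) (hμ0 : μ ≠ 0) (hμ1 : μ ≠ 1) : P *ᵥ ψ ≠ 0 := by
  intro hPψ
  have hQψ : Q *ᵥ ψ = μ • ψ := by rwa [add_mulVec, hPψ, zero_add] at hψ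
  have h := mulVec_mulVec_eq_of_add_mulVec_eq_smul hQ hψ
  rw [hPψ, mulVec_zero, hQψ, eq_comm, smul_eq_zero, smul_eq_zero] at h
  exact h.elim (fun h1 => hμ1 (sub_eq_zero.mp h1)) (·.elim hμ0 hψ0)

variable [StarRing R]

theorem IsHermitian.star_mulVec_dotProduct (hP : P.IsHermitian) (x y : n → R) :
    star (P *ᵥ x) ⬝ᵥ y = star x ⬝ᵥ (P *ᵥ y) := by
  rw [star_mulVec, hP.eq, dotProduct_mulVec]

theorem star_dotProduct_mulVec_mulVec_of_add_mulVec_eq_smul (hPh : P.IsHermitian)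
    (hP : IsIdempotentElem P) (hQh : Q.IsHermitian) (hQ : IsIdempotentElem Q)
    (hψ : (P + Q) *ᵥ ψ = μ • ψ) :
    star (Q *ᵥ (P *ᵥ ψ)) ⬝ᵥ (Q *ᵥ (P *ᵥ ψ)) = (μ - 1) ^ 2 * (star (P *ᵥ ψ) ⬝ᵥ (P *ᵥ ψ)) := by
  have hψ' : (Q + P) *ᵥ ψ = μ • ψ := by rwa [add_comm]
  calc star (Q *ᵥ (P *ᵥ ψ)) ⬝ᵥ (Q *ᵥ (P *ᵥ ψ))
      = star (P *ᵥ ψ) ⬝ᵥ (Q *ᵥ (P *ᵥ ψ)) := by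
        rw [hQh.star_mulVec_dotProduct, mulVec_mulVec_of_isIdempotentElem hQ]
    _ = (μ - 1) * (star ψ ⬝ᵥ (P *ᵥ (Q *ᵥ ψ))) := by
        rw [mulVec_mulVec_eq_of_add_mulVec_eq_smul hQ hψ, dotProduct_smul,
          hPh.star_mulVec_dotProduct, smul_eq_mul]
    _ = (μ - 1) ^ 2 * (star ψ ⬝ᵥ (P *ᵥ ψ)) := by
        rw [mulVec_mulVec_eq_of_add_mulVec_eq_smul hP hψ', dotProduct_smul, smul_eq_mul]
        ring
    _ = (μ - 1) ^ 2 * (star (P *ᵥ ψ) ⬝ᵥ (P *ᵥ ψ)) := by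
        rw [hPh.star_mulVec_dotProduct, mulVec_mulVec_of_isIdempotentElem hP]

end Projections

variable {𝕜 n : Type*} [RCLike 𝕜] [Fintype n]

theorem exists_smul_star_dotProduct_self_eq_one {w : n → 𝕜} (hw : w ≠ 0) :
    ∃ c : 𝕜, star (c • w) ⬝ᵥ (c • w) = 1 := by
  set x := WithLp.toLp 2 w
  have hx : x ≠ 0 := by simpa [x] using hw
  refine ⟨(‖x‖⁻¹ : 𝕜), ?_⟩
  have h := inner_self_eq_norm_sq_to_K (𝕜 := 𝕜) ((‖x‖⁻¹ : 𝕜) • x)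
  rw [norm_smul_inv_norm hx, EuclideanSpace.inner_eq_star_dotProduct, dotProduct_comm] at h
  simpa [x] using h

theorem IsHermitian.re_trace_mul_le [DecidableEq n] {A ρ : Matrix n n 𝕜} (hA : A.IsHermitian)
    (hρ : ρ.PosSemidef) {c : ℝ} (hc : ∀ i, hA.eigenvalues i ≤ c) :
    RCLike.re (A * ρ).trace ≤ c * RCLike.re ρ.trace := by
  set U : Matrix n n 𝕜 := (hA.eigenvectorUnitary : Matrix n n 𝕜)
  set σ := star U * ρ * U
  have hUU : U * star U = 1 := Unitary.coe_mul_star_self hA.eigenvectorUnitary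
  have hD : star U * A * U = diagonal (RCLike.ofReal ∘ hA.eigenvalues) := by
    simpa [Unitary.conjStarAlgAut_star_apply] using hA.conjStarAlgAut_star_eigenvectorUnitary
  have hσ : σ.PosSemidef := hρ.conjTranspose_mul_mul_same U
  have htrσ : σ.trace = ρ.trace := by
    rw [trace_mul_cycle, hUU, one_mul]
  have htr : (A * ρ).trace = ∑ i, (hA.eigenvalues i : 𝕜) * σ i i := by
    calc (A * ρ).trace = (star U * A * U * σ).trace := by
          have hconj : star U * A * U * σ = star U * (A * ρ) * U := by
            simp only [σ, ← mul_assoc]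
            rw [mul_assoc (star U * A), hUU, mul_one]
          rw [hconj, trace_mul_cycle, hUU, one_mul]
      _ = _ := by simp [hD, trace]
  calc RCLike.re (A * ρ).trace = ∑ i, hA.eigenvalues i * RCLike.re (σ i i) := by
        simp [htr]
    _ ≤ ∑ i, c * RCLike.re (σ i i) := by
        gcongr with i
        · exact (RCLike.nonneg_iff.mp hσ.diag_nonneg).1
        · exact hc i
    _ = c * RCLike.re ρ.trace := by
        rw [← Finset.mul_sum, ← htrσ, trace, map_sum]
        rfl

end Matrix

/-- If `P₀, P₁` are orthogonal projectors and `ρ` a density operator with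
`Tr(P₀ρ) + Tr(P₁ρ) ≥ 1 + ε`, then there is a unit vector `φ₀` in the range of `P₀`
with `‖P₁ φ₀‖² ≥ ε²`. -/
theorem stmt7 {n : ℕ} (P0 P1 : Matrix (Fin n) (Fin n) ℂ)
    (hP0h : P0.IsHermitian) (hP0p : P0 * P0 = P0)
    (hP1h : P1.IsHermitian) (hP1p : P1 * P1 = P1)
    (ρ : Matrix (Fin n) (Fin n) ℂ) (hρ : ρ.PosSemidef) (htr : ρ.trace = 1)
    (ε : ℝ) (hε : 0 < ε)
    (h : 1 + ε ≤ (P0 * ρ).trace.re + (P1 * ρ).trace.re) :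
    ∃ φ : Fin n → ℂ, (star φ ⬝ᵥ φ) = 1 ∧ P0.mulVec φ = φ ∧
      ε ^ 2 ≤ (star (P1.mulVec φ) ⬝ᵥ P1.mulVec φ).re := by
  have : Nonempty (Fin n) := by
    by_contra hempty
    rw [not_nonempty_iff] at hempty
    simp [trace] at htr
  have hA : (P0 + P1).IsHermitian := hP0h.add hP1h
  obtain ⟨i, -, hi⟩ := Finset.exists_max_image Finset.univ hA.eigenvalues Finset.univ_nonempty
  set μ := hA.eigenvalues i
  have hμ : 1 + ε ≤ μ := by
    have := hA.re_trace_mul_le hρ fun j => hi j (Finset.mem_univ j)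
    rw [htr, add_mul, trace_add] at this
    simpa using h.trans this
  set ψ := ⇑(hA.eigenvectorBasis i)
  have hψ : (P0 + P1) *ᵥ ψ = (μ : ℂ) • ψ :=
    (hA.mulVec_eigenvectorBasis i).trans (RCLike.real_smul_eq_coe_smul _ _)
  have hψ0 : ψ ≠ 0 := by simpa [ψ] using hA.eigenvectorBasis.orthonormal.ne_zero i
  obtain ⟨c, hc⟩ := exists_smul_star_dotProduct_self_eq_one <|
    mulVec_ne_zero_of_add_mulVec_eq_smul hP1p hψ hψ0 (mod_cast (by linarith : 0 < μ).ne')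
      (mod_cast (by linarith : 1 < μ).ne')
  have hcψ : (P0 + P1) *ᵥ (c • ψ) = (μ : ℂ) • (c • ψ) := by rw [mulVec_smul, hψ, smul_comm]
  refine ⟨P0 *ᵥ (c • ψ), by rwa [mulVec_smul], mulVec_mulVec_of_isIdempotentElem hP0p _, ?_⟩
  rw [star_dotProduct_mulVec_mulVec_of_add_mulVec_eq_smul hP0h hP0p hP1h hP1p hcψ, mulVec_smul,
    hc, mul_one, ← Complex.ofReal_one, ← Complex.ofReal_sub, ← Complex.ofReal_pow,
    Complex.ofReal_re]
  nlinarith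
end

section
/- Consider a non-interactive bit-commitment scheme with projective verification operators {V_y}. If the scheme is ε-binding against non-adaptive adversaries (i.e., for every density operator σ_B and every pair of openings y₀ for bit 0 and y₁ for bit 1: Tr(V_{y₀}σ_B) + Tr(V_{y₁}σ_B) ≤ 1 + ε), then it is (2^{q/2}√ε)-binding against adversaries holding a quantum register A of at most q qubits and using projective opening measurements: for every ρ_AB with dim H_A ≤ 2^q, P₀^A(ρ) + P₁^A(ρ) ≤ 1 + 2^{q/2}√ε, where P_b^A(ρ) = max over projective measurements {F_{y_b}} on A of Σ_{y_b} Tr((F_{y_b} ⊗ V_{y_b}) ρ_AB). -/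
/-!
Write `M₀ = ∑ y, F0 y ⊗ V0 y` and `M₁ = ∑ y, F1 y ⊗ V1 y`; both are orthogonal projections and the
two success probabilities are `Tr (M₀ ρ)` and `Tr (M₁ ρ)`. Any two orthogonal projections satisfy
`P + Q ≤ 1 + ‖P Q‖`, so it suffices to show `‖M₀ M₁‖² = ‖(M₀ M₁)⋆ (M₀ M₁)‖ ≤ m ε`.

Tested on pure states, non-adaptive binding says `V0 y₀ + V1 y₁ ≤ 1 + ε`, and conjugating by
`V1 y₁` gives `V1 y₁ V0 y₀ V1 y₁ ≤ ε`. Hence each summand `M₀ (F1 y₁ ⊗ V1 y₁)` of `M₀ M₁` satisfies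
`(M₀ (F1 y₁ ⊗ V1 y₁))⋆ (M₀ (F1 y₁ ⊗ V1 y₁)) ≤ ε (F1 y₁ ⊗ 1)`. Since `F1` is projective, at most
`m = dim H_A` of the `F1 y₁` are nonzero, and the operator Cauchy–Schwarz inequality over these
summands gives `(M₀ M₁)⋆ (M₀ M₁) ≤ m ε ∑ y₁, F1 y₁ ⊗ 1 = m ε`.
-/

open scoped Kronecker ComplexOrder InnerProductSpace MatrixOrder Matrix.Norms.L2Operator
open Matrix

section HilbertSpace

variable {E : Type*} [NormedAddCommGroup E] [InnerProductSpace ℂ E] [CompleteSpace E]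
  {p q : E →L[ℂ] E}

theorem IsStarProjection.inner_apply_left (hp : IsStarProjection p) (x y : E) :
    ⟪p x, y⟫_ℂ = ⟪p x, p y⟫_ℂ := by
  have hpp : p (p x) = p x := congr($(hp.isIdempotentElem.eq) x)
  conv_lhs => rw [← hpp]
  exact hp.isSelfAdjoint.isSymmetric (p x) y

theorem IsStarProjection.re_inner_apply_self (hp : IsStarProjection p) (x : E) :
    RCLike.re ⟪p x, x⟫_ℂ = ‖p x‖ ^ 2 := by
  rw [hp.inner_apply_left, inner_self_eq_norm_sq]

theorem IsStarProjection.norm_inner_apply_le (hp : IsStarProjection p) (hq : IsStarProjection q)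
    (x : E) : ‖⟪p x, q x⟫_ℂ‖ ≤ ‖p * q‖ * (‖p x‖ * ‖q x‖) := by
  have hqq : q (q x) = q x := congr($(hq.isIdempotentElem.eq) x)
  rw [hp.inner_apply_left, ← hqq]
  calc ‖⟪p x, (p * q) (q x)⟫_ℂ‖ ≤ ‖p x‖ * ‖(p * q) (q x)‖ := norm_inner_le_norm _ _
    _ ≤ ‖p x‖ * (‖p * q‖ * ‖q x‖) := by gcongr; exact (p * q).le_opNorm _
    _ = ‖p * q‖ * (‖p x‖ * ‖q (q x)‖) := by rw [hqq]; ring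

/-- With `t = ‖p x‖² + ‖q x‖²`, Cauchy–Schwarz gives `t ≤ ‖p x + q x‖ ‖x‖`, while the cross term
in `‖p x + q x‖²` is at most `‖p q‖ t`. -/
theorem IsStarProjection.re_inner_add_apply_le (hp : IsStarProjection p)
    (hq : IsStarProjection q) (x : E) :
    RCLike.re ⟪(p + q) x, x⟫_ℂ ≤ (1 + ‖p * q‖) * ‖x‖ ^ 2 := by
  set t := RCLike.re ⟪(p + q) x, x⟫_ℂ
  have ht : t = ‖p x‖ ^ 2 + ‖q x‖ ^ 2 := by
    simp only [t, _root_.add_apply, inner_add_left, map_add,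
      hp.re_inner_apply_self, hq.re_inner_apply_self]
  have hcs : t ≤ ‖p x + q x‖ * ‖x‖ := re_inner_le_norm _ _
  have hcross : |RCLike.re ⟪p x, q x⟫_ℂ| ≤ ‖p * q‖ * (‖p x‖ * ‖q x‖) :=
    (RCLike.abs_re_le_norm _).trans (hp.norm_inner_apply_le hq x)
  have hsum : ‖p x + q x‖ ^ 2 ≤ (1 + ‖p * q‖) * t := by
    rw [@norm_add_sq ℂ]
    nlinarith [abs_le.mp hcross, two_mul_le_add_sq ‖p x‖ ‖q x‖, norm_nonneg (p * q)]
  by_contra! h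
  have ht0 : 0 < t := lt_of_le_of_lt (by positivity) h
  nlinarith [mul_le_mul hcs hcs ht0.le (by positivity),
    mul_le_mul_of_nonneg_right hsum (sq_nonneg ‖x‖), mul_lt_mul_of_pos_left h ht0]

theorem IsStarProjection.add_le_algebraMap_one_add_norm_mul (hp : IsStarProjection p)
    (hq : IsStarProjection q) : p + q ≤ algebraMap ℝ (E →L[ℂ] E) (1 + ‖p * q‖) := by
  rw [ContinuousLinearMap.le_def, ContinuousLinearMap.isPositive_def']
  refine ⟨.sub (.algebraMap _ (.all _)) (hp.isSelfAdjoint.add hq.isSelfAdjoint), fun x => ?_⟩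
  have hscalar : RCLike.re ⟪algebraMap ℝ (E →L[ℂ] E) (1 + ‖p * q‖) x, x⟫_ℂ
      = (1 + ‖p * q‖) * ‖x‖ ^ 2 := by
    rw [ContinuousLinearMap.algebraMap_apply, RCLike.real_smul_eq_coe_smul (K := ℂ),
      inner_smul_left, RCLike.conj_ofReal, RCLike.re_ofReal_mul, inner_self_eq_norm_sq]
  rw [ContinuousLinearMap.reApplyInnerSelf, _root_.sub_apply, inner_sub_left, map_sub, sub_nonneg,
    hscalar]
  exact hp.re_inner_add_apply_le hq x

end HilbertSpace

section StarOrderedRing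

variable {A : Type*} [Ring A] [StarRing A] [PartialOrder A] [StarOrderedRing A]

theorem star_sum_mul_sum_le_card_smul [Module ℝ A] [PosSMulMono ℝ A] {ι : Type*}
    (s : Finset ι) (a : ι → A) :
    star (∑ i ∈ s, a i) * ∑ i ∈ s, a i ≤ (s.card : ℝ) • ∑ i ∈ s, star (a i) * a i := by
  have key : ∑ i ∈ s, ∑ j ∈ s, star (a i - a j) * (a i - a j) = (2 : ℝ) •
      ((s.card : ℝ) • ∑ i ∈ s, star (a i) * a i - star (∑ i ∈ s, a i) * ∑ i ∈ s, a i) := by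
    simp only [star_sub, sub_mul, mul_sub, Finset.sum_sub_distrib, star_sum, Finset.sum_mul,
      Finset.mul_sum, Finset.sum_const, smul_sub, two_smul, Nat.cast_smul_eq_nsmul,
      ← Finset.smul_sum]
    rw [Finset.sum_comm (f := fun i j => star (a i) * a j)]
    abel
  have hnonneg : 0 ≤ ∑ i ∈ s, ∑ j ∈ s, star (a i - a j) * (a i - a j) :=
    Finset.sum_nonneg fun i _ => Finset.sum_nonneg fun j _ => star_mul_self_nonneg _
  rw [key] at hnonneg
  have := smul_nonneg (by norm_num : (0 : ℝ) ≤ 1 / 2) hnonneg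
  rwa [smul_smul, one_div_mul_cancel two_ne_zero, one_smul, sub_nonneg] at this

theorem IsStarProjection.mul_mul_le_algebraMap_of_add_le [Algebra ℝ A] [PosSMulMono ℝ A]
    {p q : A} (hq : IsStarProjection q) {ε : ℝ} (hε : 0 ≤ ε)
    (h : p + q ≤ algebraMap ℝ A (1 + ε)) : q * p * q ≤ algebraMap ℝ A ε := by
  have hqq : q * q = q := hq.isIdempotentElem.eq
  have hconj : q * (p + q) * q ≤ q * algebraMap ℝ A (1 + ε) * q := by
    simpa only [hq.isSelfAdjoint.star_eq] using star_left_conjugate_le_conjugate h q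
  calc q * p * q = q * (p + q) * q - q := by rw [mul_add, add_mul, hqq, hqq, add_sub_cancel_right]
    _ ≤ q * algebraMap ℝ A (1 + ε) * q - q := sub_le_sub_right hconj q
    _ = ε • q := by
      rw [← Algebra.commutes, mul_assoc, hqq, ← Algebra.smul_def, add_smul, one_smul,
        add_sub_cancel_left]
    _ ≤ ε • 1 := smul_le_smul_of_nonneg_left hq.le_one hε
    _ = algebraMap ℝ A ε := (Algebra.algebraMap_eq_smul_one ε).symm

end StarOrderedRing

structure IsProjectiveMeasurement {α A : Type*} [Fintype α] [Semiring A] [Star A] (F : α → A) :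
    Prop where
  isStarProjection : ∀ a, IsStarProjection (F a)
  sum_eq_one : ∑ a, F a = 1

/-- Conjugating `F a + F b ≤ 1` by `F a` gives `(F b F a)⋆ (F b F a) = F a F b F a ≤ 0`. -/
theorem IsProjectiveMeasurement.mul_eq_zero {α A : Type*} [Fintype α] [NormedRing A] [StarRing A]
    [CStarRing A] [PartialOrder A] [StarOrderedRing A] {F : α → A}
    (hF : IsProjectiveMeasurement F) {a b : α} (hab : a ≠ b) : F a * F b = 0 := by
  classical
  have ha := hF.isStarProjection a
  have hb := hF.isStarProjection b
  have hle : F a + F b ≤ 1 := by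
    rw [← Finset.sum_pair hab, ← hF.sum_eq_one]
    exact Finset.sum_le_sum_of_subset_of_nonneg (Finset.subset_univ _)
      fun c _ _ => (hF.isStarProjection c).nonneg
  have hconj := star_left_conjugate_le_conjugate hle (F a)
  rw [ha.isSelfAdjoint.star_eq, mul_one, ha.isIdempotentElem.eq, mul_add, add_mul,
    ha.isIdempotentElem.eq, ha.isIdempotentElem.eq, add_le_iff_nonpos_right] at hconj
  have hsq : star (F b * F a) * (F b * F a) = F a * F b * F a := by
    rw [star_mul, ha.isSelfAdjoint.star_eq, hb.isSelfAdjoint.star_eq, mul_assoc,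
      ← mul_assoc (F b), hb.isIdempotentElem.eq, mul_assoc]
  have hba : F b * F a = 0 := CStarRing.star_mul_self_eq_zero_iff _ |>.mp <|
    le_antisymm (hsq ▸ hconj) (star_mul_self_nonneg _)
  simpa [ha.isSelfAdjoint.star_eq, hb.isSelfAdjoint.star_eq] using congr(star $hba)

namespace Matrix

theorem sum_kronecker {R ι κ α : Type*} [NonUnitalNonAssocSemiring R] (s : Finset α)
    (A : α → Matrix ι ι R) (B : Matrix κ κ R) : (∑ a ∈ s, A a) ⊗ₖ B = ∑ a ∈ s, A a ⊗ₖ B := by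
  ext ⟨i, k⟩ ⟨j, l⟩
  simp only [kronecker_apply, sum_apply, Finset.sum_mul]

theorem _root_.IsSelfAdjoint.kronecker {R ι κ : Type*} [CommSemiring R] [StarRing R]
    {A : Matrix ι ι R} {B : Matrix κ κ R} (hA : IsSelfAdjoint A) (hB : IsSelfAdjoint B) :
    IsSelfAdjoint (A ⊗ₖ B) := by
  rw [IsSelfAdjoint, star_eq_conjTranspose, conjTranspose_kronecker]
  exact congr($hA ⊗ₖ $hB)

theorem kronecker_le_kronecker_left {ι κ : Type*} [Fintype ι] [Fintype κ] {A : Matrix ι ι ℂ}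
    (hA : 0 ≤ A) {B C : Matrix κ κ ℂ} (hBC : B ≤ C) : A ⊗ₖ B ≤ A ⊗ₖ C := by
  have hsub : A ⊗ₖ C - A ⊗ₖ B = A ⊗ₖ (C - B) := by
    rw [sub_eq_iff_eq_add, ← kronecker_add, sub_add_cancel]
  rw [le_iff, hsub]
  exact hA.posSemidef.kronecker (le_iff.mp hBC)

variable {ι : Type*} [Fintype ι] [DecidableEq ι]

theorem re_trace_mul_le_re_trace_mul {A B ρ : Matrix ι ι ℂ} (hAB : A ≤ B) (hρ : ρ.PosSemidef) :
    (A * ρ).trace.re ≤ (B * ρ).trace.re := by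
  obtain ⟨r, rfl⟩ := CStarAlgebra.nonneg_iff_eq_star_mul_self.mp hρ.nonneg
  have h := ((le_iff.mp hAB).mul_mul_conjTranspose_same r).trace_nonneg
  rw [← star_eq_conjTranspose, trace_mul_cycle, trace_mul_comm, sub_mul, trace_sub,
    sub_nonneg] at h
  exact (Complex.le_def.mp h).1

/-- Testing on the pure state `x x⋆ / (x⋆ x)` bounds `x⋆ A x` by `c x⋆ x`. -/
theorem le_algebraMap_of_forall_state {A : Matrix ι ι ℂ} (hA : A.IsHermitian) {c : ℝ}
    (h : ∀ σ : Matrix ι ι ℂ, σ.PosSemidef → σ.trace = 1 → (A * σ).trace.re ≤ c) :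
    A ≤ algebraMap ℝ _ c := by
  rw [le_iff, posSemidef_iff_dotProduct_mulVec]
  refine ⟨(IsSelfAdjoint.algebraMap _ (.all c)).sub hA, fun x => ?_⟩
  rcases eq_or_ne x 0 with rfl | hx
  · simp
  obtain ⟨r, hr, hxx⟩ : ∃ r : ℝ, 0 < r ∧ (r : ℂ) = star x ⬝ᵥ x :=
    have ⟨hre, him⟩ := Complex.lt_def.mp (dotProduct_star_self_pos_iff.mpr hx)
    ⟨_, hre, Complex.ext rfl him⟩
  obtain ⟨w, hw⟩ : ∃ w : ℝ, (w : ℂ) = star x ⬝ᵥ A *ᵥ x :=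
    ⟨_, Complex.ext rfl (by simpa using (hA.im_star_dotProduct_mulVec_self x).symm)⟩
  have hσ := h ((r : ℂ)⁻¹ • vecMulVec x (star x))
    ((posSemidef_vecMulVec_self_star x).smul (by positivity))
    (by rw [trace_smul, trace_vecMulVec, dotProduct_comm, ← hxx, smul_eq_mul,
      inv_mul_cancel₀ (Complex.ofReal_ne_zero.mpr hr.ne')])
  rw [Matrix.mul_smul, trace_smul, mul_vecMulVec, trace_vecMulVec, dotProduct_comm, ← hw,
    smul_eq_mul, ← Complex.ofReal_inv, ← Complex.ofReal_mul, Complex.ofReal_re,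
    inv_mul_le_iff₀ hr] at hσ
  rw [sub_mulVec, dotProduct_sub, ← hw, Algebra.algebraMap_eq_smul_one, smul_mulVec, one_mulVec,
    dotProduct_smul, ← hxx, Complex.real_smul, ← Complex.ofReal_mul, ← Complex.ofReal_sub,
    Complex.zero_le_real]
  linarith

theorem add_le_algebraMap_one_add_norm_mul {P Q : Matrix ι ι ℂ} (hP : IsStarProjection P)
    (hQ : IsStarProjection Q) : P + Q ≤ algebraMap ℝ _ (1 + ‖P * Q‖) := by
  rw [← map_le_map_iff (toEuclideanCLM (n := ι) (𝕜 := ℂ)), map_add,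
    IsScalarTower.algebraMap_apply ℝ ℂ (Matrix ι ι ℂ), AlgHomClass.commutes,
    ← IsScalarTower.algebraMap_apply, cstar_norm_def, map_mul]
  exact (hP.map _).add_le_algebraMap_one_add_norm_mul (hQ.map _)

theorem re_trace_mul_add_re_trace_mul_le {P Q ρ : Matrix ι ι ℂ} (hP : IsStarProjection P)
    (hQ : IsStarProjection Q) (hρ : ρ.PosSemidef) (htr : ρ.trace = 1) :
    (P * ρ).trace.re + (Q * ρ).trace.re ≤ 1 + ‖P * Q‖ := by
  simpa [add_mul, Algebra.algebraMap_eq_smul_one, htr] using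
    re_trace_mul_le_re_trace_mul (add_le_algebraMap_one_add_norm_mul hP hQ) hρ

theorem IsIdempotentElem.trace_eq_finrank_range {K : Type*} [Field K] {P : Matrix ι ι K}
    (hP : IsIdempotentElem P) : P.trace = Module.finrank K (LinearMap.range (toLin' P)) := by
  rw [← trace_toLin'_eq]
  exact ((LinearMap.isProj_range_iff_isIdempotentElem _).mpr (hP.map toLinAlgEquiv')).trace

open Classical in
theorem card_filter_ne_zero_le_of_sum_eq_one {K α : Type*} [Field K] [CharZero K] [Fintype α]
    {F : α → Matrix ι ι K} (hF : ∀ a, IsIdempotentElem (F a)) (hsum : ∑ a, F a = 1) :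
    (Finset.univ.filter fun a => F a ≠ 0).card ≤ Fintype.card ι := by
  set r : α → ℕ := fun a => Module.finrank K (LinearMap.range (toLin' (F a)))
  have hr : ∑ a, r a = Fintype.card ι := by
    have : ((∑ a, r a : ℕ) : K) = Fintype.card ι := by
      rw [Nat.cast_sum, ← trace_one, ← hsum, trace_sum]
      exact Finset.sum_congr rfl fun a _ => ((hF a).trace_eq_finrank_range).symm
    exact_mod_cast this
  rw [← hr, Finset.card_eq_sum_ones]
  refine (Finset.sum_le_sum fun a ha => ?_).trans
    (Finset.sum_le_sum_of_subset_of_nonneg (Finset.filter_subset _ _) fun _ _ _ => Nat.zero_le _)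
  rw [Nat.one_le_iff_ne_zero, Ne, Submodule.finrank_eq_zero, LinearMap.range_eq_bot,
    LinearEquiv.map_eq_zero_iff]
  exact (Finset.mem_filter.mp ha).2

end Matrix

section SuccessOperator

variable {ι κ α β : Type*} [Fintype ι] [DecidableEq ι] [Fintype κ] [DecidableEq κ]
  [Fintype α] [Fintype β]

/-- Measuring `F` on the first factor and verifying the outcome `a` with `V a` on the second
succeeds on the state `ρ` with probability `Tr (successOperator F V * ρ)`. -/
def successOperator (F : α → Matrix ι ι ℂ) (V : α → Matrix κ κ ℂ) :
    Matrix (ι × κ) (ι × κ) ℂ :=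
  ∑ a, F a ⊗ₖ V a

omit [DecidableEq κ] in
theorem IsProjectiveMeasurement.isStarProjection_successOperator {F : α → Matrix ι ι ℂ}
    (hF : IsProjectiveMeasurement F) {V : α → Matrix κ κ ℂ} (hV : ∀ a, IsStarProjection (V a)) :
    IsStarProjection (successOperator F V) := by
  classical
  refine ⟨?_, ?_⟩
  · rw [IsIdempotentElem, successOperator, Finset.sum_mul_sum]
    refine Finset.sum_congr rfl fun a _ => ?_
    rw [Finset.sum_eq_single a, ← mul_kronecker_mul, (hF.isStarProjection a).isIdempotentElem.eq,
      (hV a).isIdempotentElem.eq]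
    · intro b _ hba
      rw [← mul_kronecker_mul, hF.mul_eq_zero hba.symm, zero_kronecker]
    · simp
  · exact isSelfAdjoint_sum _ fun a _ =>
      (hF.isStarProjection a).isSelfAdjoint.kronecker (hV a).isSelfAdjoint

theorem kronecker_mul_successOperator_mul_le {F : α → Matrix ι ι ℂ} (hF₀ : ∀ a, 0 ≤ F a)
    (hF₁ : ∑ a, F a = 1) {V : α → Matrix κ κ ℂ} {G : Matrix ι ι ℂ} (hG : IsSelfAdjoint G)
    {W : Matrix κ κ ℂ} {ε : ℝ} (hV : ∀ a, W * V a * W ≤ algebraMap ℝ _ ε) :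
    (G ⊗ₖ W) * successOperator F V * (G ⊗ₖ W) ≤ ε • ((G * G) ⊗ₖ 1) := by
  have hexpand : (G ⊗ₖ W) * successOperator F V * (G ⊗ₖ W)
      = ∑ a, (G * F a * G) ⊗ₖ (W * V a * W) := by
    simp only [successOperator, Finset.mul_sum, Finset.sum_mul, mul_kronecker_mul]
  have hscalar : ε • ((G * G) ⊗ₖ (1 : Matrix κ κ ℂ))
      = ∑ a, (G * F a * G) ⊗ₖ algebraMap ℝ _ ε := by
    rw [← sum_kronecker, ← Finset.sum_mul, ← Finset.mul_sum, hF₁, mul_one,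
      Algebra.algebraMap_eq_smul_one, kronecker_smul]
  rw [hexpand, hscalar]
  refine Finset.sum_le_sum fun a _ => kronecker_le_kronecker_left ?_ (hV a)
  simpa only [hG.star_eq] using star_left_conjugate_le_conjugate (hF₀ a) G |>.trans_eq' (by simp)

theorem IsProjectiveMeasurement.star_mul_self_successOperator_mul_kronecker_le
    {F : α → Matrix ι ι ℂ} {V : α → Matrix κ κ ℂ} (hF : IsProjectiveMeasurement F)
    (hV : ∀ a, IsStarProjection (V a)) {G : Matrix ι ι ℂ} (hG : IsStarProjection G)
    {W : Matrix κ κ ℂ} (hW : IsSelfAdjoint W) {ε : ℝ} (hWV : ∀ a, W * V a * W ≤ algebraMap ℝ _ ε) :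
    star (successOperator F V * (G ⊗ₖ W)) * (successOperator F V * (G ⊗ₖ W)) ≤ ε • (G ⊗ₖ 1) := by
  have hM := hF.isStarProjection_successOperator hV
  calc star (successOperator F V * (G ⊗ₖ W)) * (successOperator F V * (G ⊗ₖ W))
      = (G ⊗ₖ W) * successOperator F V * (G ⊗ₖ W) := by
        rw [star_mul, (hG.isSelfAdjoint.kronecker hW).star_eq, hM.isSelfAdjoint.star_eq, mul_assoc,
          ← mul_assoc (successOperator F V), hM.isIdempotentElem.eq, mul_assoc]
    _ ≤ ε • ((G * G) ⊗ₖ 1) := kronecker_mul_successOperator_mul_le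
        (fun a => (hF.isStarProjection a).nonneg) hF.sum_eq_one hG.isSelfAdjoint hWV
    _ = ε • (G ⊗ₖ 1) := by rw [hG.isIdempotentElem.eq]

theorem star_mul_self_successOperator_mul_le {F₀ : α → Matrix ι ι ℂ} {V₀ : α → Matrix κ κ ℂ}
    {F₁ : β → Matrix ι ι ℂ} {V₁ : β → Matrix κ κ ℂ} (hF₀ : IsProjectiveMeasurement F₀)
    (hV₀ : ∀ a, IsStarProjection (V₀ a)) (hF₁ : IsProjectiveMeasurement F₁)
    (hV₁ : ∀ b, IsSelfAdjoint (V₁ b)) {ε : ℝ} (hε : 0 ≤ ε)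
    (hV : ∀ a b, V₁ b * V₀ a * V₁ b ≤ algebraMap ℝ _ ε) :
    star (successOperator F₀ V₀ * successOperator F₁ V₁) *
        (successOperator F₀ V₀ * successOperator F₁ V₁)
      ≤ algebraMap ℝ _ (Fintype.card ι * ε) := by
  classical
  set M := successOperator F₀ V₀
  set S := Finset.univ.filter fun b => F₁ b ≠ 0
  have hS : ∀ b ∉ S, F₁ b = 0 := fun b hb => by simpa [S] using hb
  have hsplit : M * successOperator F₁ V₁ = ∑ b ∈ S, M * (F₁ b ⊗ₖ V₁ b) := by
    rw [successOperator, Finset.mul_sum, Finset.sum_subset (Finset.subset_univ S)]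
    intro b _ hb
    rw [hS b hb, zero_kronecker, mul_zero]
  have hterm (b) : star (M * (F₁ b ⊗ₖ V₁ b)) * (M * (F₁ b ⊗ₖ V₁ b)) ≤ ε • (F₁ b ⊗ₖ 1) :=
    hF₀.star_mul_self_successOperator_mul_kronecker_le hV₀ (hF₁.isStarProjection b) (hV₁ b)
      fun a => hV a b
  have hcard : (S.card : ℝ) ≤ Fintype.card ι := by
    exact_mod_cast card_filter_ne_zero_le_of_sum_eq_one
      (fun b => (hF₁.isStarProjection b).isIdempotentElem) hF₁.sum_eq_one
  have hsumS : ∑ b ∈ S, F₁ b ⊗ₖ (1 : Matrix κ κ ℂ) = 1 := by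
    rw [← sum_kronecker, Finset.sum_subset (Finset.subset_univ S) fun b _ hb => hS b hb,
      hF₁.sum_eq_one, one_kronecker_one]
  rw [hsplit]
  calc star (∑ b ∈ S, M * (F₁ b ⊗ₖ V₁ b)) * ∑ b ∈ S, M * (F₁ b ⊗ₖ V₁ b)
      ≤ (S.card : ℝ) • ∑ b ∈ S, star (M * (F₁ b ⊗ₖ V₁ b)) * (M * (F₁ b ⊗ₖ V₁ b)) :=
        star_sum_mul_sum_le_card_smul S _
    _ ≤ (S.card : ℝ) • ∑ b ∈ S, ε • (F₁ b ⊗ₖ 1) :=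
        smul_le_smul_of_nonneg_left (Finset.sum_le_sum fun b _ => hterm b) (by positivity)
    _ = (S.card * ε : ℝ) • 1 := by rw [← Finset.smul_sum, hsumS, smul_smul]
    _ ≤ (Fintype.card ι * ε : ℝ) • 1 := smul_le_smul_of_nonneg_right (by gcongr) zero_le_one
    _ = algebraMap ℝ _ (Fintype.card ι * ε) := (Algebra.algebraMap_eq_smul_one _).symm

theorem norm_successOperator_mul_le {F₀ : α → Matrix ι ι ℂ} {V₀ : α → Matrix κ κ ℂ}
    {F₁ : β → Matrix ι ι ℂ} {V₁ : β → Matrix κ κ ℂ} (hF₀ : IsProjectiveMeasurement F₀)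
    (hV₀ : ∀ a, IsStarProjection (V₀ a)) (hF₁ : IsProjectiveMeasurement F₁)
    (hV₁ : ∀ b, IsSelfAdjoint (V₁ b)) {ε : ℝ} (hε : 0 ≤ ε)
    (hV : ∀ a b, V₁ b * V₀ a * V₁ b ≤ algebraMap ℝ _ ε) :
    ‖successOperator F₀ V₀ * successOperator F₁ V₁‖ ≤ √(Fintype.card ι * ε) := by
  rw [Real.le_sqrt (norm_nonneg _) (by positivity), sq, ← CStarRing.norm_star_mul_self,
    CStarAlgebra.norm_le_iff_le_algebraMap _ (by positivity) (star_mul_self_nonneg _)]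
  exact star_mul_self_successOperator_mul_le hF₀ hV₀ hF₁ hV₁ hε hV

end SuccessOperator

/-- If a non-interactive bit-commitment scheme with projective verification `{V_y}` is
`ε`-binding against non-adaptive adversaries, then it is `2^{q/2}√ε`-binding against
adversaries holding a quantum register `A` of at most `q` qubits and using projective
opening measurements. -/
theorem stmt8 {nb q m : ℕ} {Y0 Y1 : Type} [Fintype Y0] [Fintype Y1]
    (V0 : Y0 → Matrix (Fin nb) (Fin nb) ℂ) (V1 : Y1 → Matrix (Fin nb) (Fin nb) ℂ)
    (hV0h : ∀ y, (V0 y).IsHermitian) (hV0p : ∀ y, V0 y * V0 y = V0 y)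
    (hV1h : ∀ y, (V1 y).IsHermitian) (hV1p : ∀ y, V1 y * V1 y = V1 y)
    (ε : ℝ) (hε : 0 ≤ ε)
    (hNA : ∀ σ : Matrix (Fin nb) (Fin nb) ℂ, σ.PosSemidef → σ.trace = 1 →
      ∀ y0 y1, (V0 y0 * σ).trace.re + (V1 y1 * σ).trace.re ≤ 1 + ε)
    (hm : m ≤ 2 ^ q)
    (ρ : Matrix (Fin m × Fin nb) (Fin m × Fin nb) ℂ) (hρ : ρ.PosSemidef) (htr : ρ.trace = 1)
    (F0 : Y0 → Matrix (Fin m) (Fin m) ℂ) (F1 : Y1 → Matrix (Fin m) (Fin m) ℂ)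
    (hF0h : ∀ y, (F0 y).IsHermitian) (hF0p : ∀ y, F0 y * F0 y = F0 y) (hF0s : ∑ y, F0 y = 1)
    (hF1h : ∀ y, (F1 y).IsHermitian) (hF1p : ∀ y, F1 y * F1 y = F1 y) (hF1s : ∑ y, F1 y = 1) :
    ∑ y, ((F0 y ⊗ₖ V0 y) * ρ).trace.re + ∑ y, ((F1 y ⊗ₖ V1 y) * ρ).trace.re
      ≤ 1 + (2 : ℝ) ^ ((q : ℝ) / 2) * Real.sqrt ε := by
  have hF₀ : IsProjectiveMeasurement F0 := ⟨fun y => ⟨hF0p y, hF0h y⟩, hF0s⟩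
  have hF₁ : IsProjectiveMeasurement F1 := ⟨fun y => ⟨hF1p y, hF1h y⟩, hF1s⟩
  have hV₀ (y) : IsStarProjection (V0 y) := ⟨hV0p y, hV0h y⟩
  have hV₁ (y) : IsStarProjection (V1 y) := ⟨hV1p y, hV1h y⟩
  have hV (y0 y1) : V1 y1 * V0 y0 * V1 y1 ≤ algebraMap ℝ _ ε := by
    refine (hV₁ y1).mul_mul_le_algebraMap_of_add_le hε <|
      le_algebraMap_of_forall_state ((hV0h y0).add (hV1h y1)) fun σ hσ hσ₁ => ?_
    simpa only [add_mul, trace_add, Complex.add_re] using hNA σ hσ hσ₁ y0 y1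
  have hnorm := norm_successOperator_mul_le hF₀ hV₀ hF₁ (fun y => (hV₁ y).isSelfAdjoint) hε hV
  rw [Fintype.card_fin, Real.sqrt_mul m.cast_nonneg] at hnorm
  have hm' : √(m : ℝ) ≤ 2 ^ ((q : ℝ) / 2) := by
    rw [div_eq_mul_one_div, Real.rpow_mul zero_le_two, Real.rpow_natCast, ← Real.sqrt_eq_rpow]
    exact Real.sqrt_le_sqrt (by exact_mod_cast hm)
  calc ∑ y, ((F0 y ⊗ₖ V0 y) * ρ).trace.re + ∑ y, ((F1 y ⊗ₖ V1 y) * ρ).trace.re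
      = (successOperator F0 V0 * ρ).trace.re + (successOperator F1 V1 * ρ).trace.re := by
        simp only [successOperator, Finset.sum_mul, trace_sum, Complex.re_sum]
    _ ≤ 1 + ‖successOperator F0 V0 * successOperator F1 V1‖ :=
        re_trace_mul_add_re_trace_mul_le (hF₀.isStarProjection_successOperator hV₀)
          (hF₁.isStarProjection_successOperator hV₁) hρ htr
    _ ≤ 1 + 2 ^ ((q : ℝ) / 2) * √ε := by grw [hnorm, hm']
end
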